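/- An ordered tree T with k vertices has exactly rpl(T) + 1 distinct ordered trees with k+1 vertices whose parent (under removal of the rightmost leaf) is T. -/
import Mathlib


/-- An ordered (plane) tree: a root together with the list of subtrees of its
children.  The children are listed **rightmost first** (so the head of the
list is the rightmost child). -/
inductive OTree : Type
  | node : List OTree → OTree

namespace OTree

-- Number of vertices of an ordered tree.
mutual
  def size : OTree → ℕ
    | .node ts => 1 + sizeAux ts
  def sizeAux : List OTree → ℕ
    | [] => 0
    | t :: ts => size t + sizeAux ts
end

/-- `rpl T` is the number of edges of the rightmost path of `T`
(the path from the root that always follows the rightmost child). -/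
def rpl : OTree → ℕ
  | .node [] => 0
  | .node (t :: _) => 1 + rpl t

/-- `p T` removes the rightmost leaf of `T` (the endpoint of the rightmost
path).  On the one-vertex tree it is the identity (junk value). -/
def p : OTree → OTree
  | .node [] => .node []
  | .node (.node [] :: ts) => .node ts
  | .node (.node (c :: cs) :: ts) => .node (p (.node (c :: cs)) :: ts)

/-- `C T i` appends a new leaf as the rightmost child of the vertex at
level `i` on the rightmost path of `T` (the root has level 1).
Junk values are returned when `i = 0` or `i` exceeds `rpl T + 1`. -/
def C : OTree → ℕ → OTree
  | t, 0 => t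
  | .node ts, 1 => .node (.node [] :: ts)
  | .node [], _ + 2 => .node []
  | .node (t :: ts), n + 2 => .node (C t (n + 1) :: ts)

/-- The number of children of the parent of the rightmost leaf
(junk value `0` on the one-vertex tree, which has no such parent). -/
def rmlParentDeg : OTree → ℕ
  | .node [] => 0
  | .node (.node [] :: ts) => ts.length + 1
  | .node (.node (c :: cs) :: _) => rmlParentDeg (.node (c :: cs))

/-- `T` has the pony-tail if the rightmost child of the root has exactly one
child, which is a leaf. -/
def ponyTail : OTree → Prop
  | .node (.node [.node []] :: _) => True
  | _ => False

end OTree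

/-- `AppendLeaf T T'` holds when `T'` is obtained from `T` by attaching one
new leaf to some vertex of `T`, at some position among its children. -/
inductive AppendLeaf : OTree → OTree → Prop
  | root (l r : List OTree) :
      AppendLeaf (.node (l ++ r)) (.node (l ++ OTree.node [] :: r))
  | child (l r : List OTree) (t t' : OTree) :
      AppendLeaf t t' → AppendLeaf (.node (l ++ t :: r)) (.node (l ++ t' :: r))

/-- `DelApp T T'` holds when `T'` can be obtained from `T` by deleting one
leaf and then appending one new leaf somewhere (delete-and-append a leaf). -/
def DelApp (T T' : OTree) : Prop :=
  ∃ S : OTree, AppendLeaf S T ∧ AppendLeaf S T'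

/-- `CopyingAt T T' j` : `T` is copying `T'` at level `j`, i.e. `T'` is
obtained from `T` by appending a new leaf which becomes the rightmost leaf of
`T'` (namely forming `C T j`, whose rightmost path has `j` edges) and then
removing some other leaf. -/
def CopyingAt (T T' : OTree) (j : ℕ) : Prop :=
  T ≠ T' ∧ 1 ≤ j ∧ j ≤ T.rpl + 1 ∧ T'.rpl = j ∧ AppendLeaf T' (T.C j)

/-- `T` is copying `T'`. -/
def Copying (T T' : OTree) : Prop := ∃ j : ℕ, CopyingAt T T' j



namespace OTree

theorem size_pos : ∀ T : OTree, 1 ≤ T.size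
  | .node ts => by simp [size]

theorem rpl_C : ∀ (T : OTree) (n : ℕ), n ≤ T.rpl → (T.C (n + 1)).rpl = n + 1
  | .node ts, 0, _ => by simp [C, rpl]
  | .node [], n + 1, h => by simp [rpl] at h
  | .node (t :: ts), n + 1, h => by
      have ht : n ≤ t.rpl := by simp [rpl] at h; omega
      have ih := rpl_C t n ht
      show (OTree.node (C t (n + 1) :: ts)).rpl = n + 2
      simp [rpl, ih]; omega

theorem size_C : ∀ (T : OTree) (n : ℕ), n ≤ T.rpl → (T.C (n + 1)).size = T.size + 1
  | .node ts, 0, _ => by simp [C, size, sizeAux]; omega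
  | .node [], n + 1, h => by simp [rpl] at h
  | .node (t :: ts), n + 1, h => by
      have ht : n ≤ t.rpl := by simp [rpl] at h; omega
      have ih := size_C t n ht
      show (OTree.node (C t (n + 1) :: ts)).size = _
      simp [size, sizeAux, ih]; omega

theorem p_C : ∀ (T : OTree) (n : ℕ), n ≤ T.rpl → (T.C (n + 1)).p = T
  | .node ts, 0, _ => by simp [C, p]
  | .node [], n + 1, h => by simp [rpl] at h
  | .node (t :: ts), n + 1, h => by
      have ht : n ≤ t.rpl := by simp [rpl] at h; omega
      have ih := p_C t n ht
      have hr := rpl_C t n ht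
      show (OTree.node (C t (n + 1) :: ts)).p = _
      generalize hC : t.C (n + 1) = u at ih hr ⊢
      obtain ⟨l⟩ := u
      cases l with
      | nil => simp [rpl] at hr
      | cons c cs => simp [p] at ih ⊢; exact ih

theorem C_p : ∀ (t : OTree) (ts : List OTree),
    ((OTree.node (t :: ts)).p).C ((OTree.node (t :: ts)).rpl) = .node (t :: ts)
  | .node [], ts => by simp [p, rpl, C]
  | .node (c :: cs), ts => by
      have ih := C_p c cs
      have h1 : (OTree.node (OTree.node (c :: cs) :: ts)).rpl = (OTree.node (c :: cs)).rpl + 1 := by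
        simp [rpl]; omega
      have h2 : (OTree.node (c :: cs)).rpl = c.rpl + 1 := by simp [rpl]; omega
      rw [h1, h2]
      show (OTree.node ((OTree.node (c :: cs)).p :: ts)).C (c.rpl + 1 + 1) = _
      show OTree.node (((OTree.node (c :: cs)).p).C (c.rpl + 1) :: ts) = _
      rw [← h2, ih]

theorem rpl_p_le : ∀ (t : OTree) (ts : List OTree),
    (OTree.node (t :: ts)).rpl ≤ (OTree.node (t :: ts)).p.rpl + 1
  | .node [], ts => by simp [p, rpl]
  | .node (c :: cs), ts => by
      have ih := rpl_p_le c cs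
      show (OTree.node (OTree.node (c :: cs) :: ts)).rpl ≤
        (OTree.node ((OTree.node (c :: cs)).p :: ts)).rpl + 1
      simp [rpl] at ih ⊢
      omega

end OTree

/-- An ordered tree `T` with `k` vertices has exactly `rpl T + 1` distinct
ordered trees with `k+1` vertices whose parent (under removal of the rightmost
leaf) is `T`. -/
theorem stmt_3 (k : ℕ) (T : OTree) (hT : T.size = k) :
    Nat.card {T' : OTree // T'.size = k + 1 ∧ T'.p = T} = T.rpl + 1 := by

  subst hT
  have hk1 : 1 ≤ T.size := OTree.size_pos T
  have e : Fin (T.rpl + 1) ≃ {T' : OTree // T'.size = T.size + 1 ∧ T'.p = T} :=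
    { toFun := fun i => ⟨T.C (i + 1),
        OTree.size_C T i (by omega), OTree.p_C T i (by omega)⟩
      invFun := fun T' => ⟨T'.1.rpl - 1, by
        obtain ⟨⟨ts⟩, hs, hp⟩ := T'
        cases ts with
        | nil => simp [OTree.size, OTree.sizeAux] at hs; omega
        | cons t ts =>
          have := OTree.rpl_p_le t ts
          rw [hp] at this
          simp [OTree.rpl] at this ⊢
          omega⟩
      left_inv := fun i => by
        have := OTree.rpl_C T i (by omega)
        ext
        simp [this]
      right_inv := fun T' => by
        obtain ⟨⟨ts⟩, hs, hp⟩ := T'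
        cases ts with
        | nil => simp [OTree.size, OTree.sizeAux] at hs; omega
        | cons t ts =>
          have hr : (OTree.node (t :: ts)).rpl = t.rpl + 1 := by simp [OTree.rpl]; omega
          have := OTree.C_p t ts
          rw [hp] at this
          ext : 1
          show T.C ((OTree.node (t :: ts)).rpl - 1 + 1) = _
          rw [hr]
          simpa [hr] using this }
  rw [← Nat.card_congr e, Nat.card_eq_fintype_card, Fintype.card_fin]
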